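/- arXiv:1507.00082 — 2 statements merged into one kernel-verified Lean document; each statement's English description precedes it below -/
import Mathlib

section
/- Let Ω ⊂ ℝ² be an open bounded convex set with smooth boundary curve S, arc-length parametrized by z : [a,b] → ℝ². If x, y ∈ Ω lie on a common circle centered at the boundary point a = z(a) (i.e. |x - a| = |y - a|) and x ≠ y, then ⟨x - y, z'(a)⟩ ≠ 0, where z'(a) is the unit tangent vector of S at a. -/
open scoped RealInnerProductSpace
open Module Filter Topology

lemma two_dim_perp (w e d : EuclideanSpace ℝ (Fin 2)) (hw : w ≠ 0) (he : e ≠ 0)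
    (h1 : ⟪w, e⟫ = 0) (h2 : ⟪w, d⟫ = 0) : ∃ t : ℝ, d = t • e := by
  set W := (ℝ ∙ w)ᗮ with hW
  have hWrank : finrank ℝ W = 1 := by
    have h := (ℝ ∙ w).finrank_add_finrank_orthogonal
    rw [finrank_span_singleton hw, finrank_euclideanSpace_fin] at h
    rw [hW]; omega
  have heW : e ∈ W := Submodule.mem_orthogonal_singleton_iff_inner_right.2 h1
  have hdW : d ∈ W := Submodule.mem_orthogonal_singleton_iff_inner_right.2 h2
  have hle : (ℝ ∙ e) ≤ W := by
    rw [Submodule.span_singleton_le_iff_mem]; exact heW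
  have : (ℝ ∙ e) = W :=
    Submodule.eq_of_le_of_finrank_eq hle (by rw [finrank_span_singleton he, hWrank])
  have : d ∈ (ℝ ∙ e) := this ▸ hdW
  obtain ⟨t, ht⟩ := Submodule.mem_span_singleton.1 this
  exact ⟨t, ht.symm⟩

/-- If `Ω ⊂ ℝ²` is an open bounded convex set with smooth boundary curve,
arc-length parametrized by `z : [a,b] → ℝ²`, and `x, y ∈ Ω` lie on a common circle
centered at the boundary point `z a` with `x ≠ y`, then `⟪x - y, z'(a)⟫ ≠ 0`. -/
theorem stmt0 (Ω : Set (EuclideanSpace ℝ (Fin 2))) (hΩo : IsOpen Ω)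
    (hΩb : Bornology.IsBounded Ω) (hΩc : Convex ℝ Ω)
    (a b : ℝ) (hab : a < b) (z : ℝ → EuclideanSpace ℝ (Fin 2))
    (hz : ContDiff ℝ (⊤ : ℕ∞) z)
    (hboundary : ∀ s ∈ Set.Icc a b, z s ∈ frontier Ω)
    (hunit : ∀ s ∈ Set.Icc a b, ‖deriv z s‖ = 1)
    (x y : EuclideanSpace ℝ (Fin 2)) (hx : x ∈ Ω) (hy : y ∈ Ω) (hxy : x ≠ y)
    (hr : ‖x - z a‖ = ‖y - z a‖) :
    ⟪x - y, deriv z a⟫ ≠ 0 := by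
  intro h0
  set e := deriv z a with he
  have haI : a ∈ Set.Icc a b := ⟨le_rfl, hab.le⟩
  have hza_fr : z a ∈ frontier Ω := hboundary a haI
  have hfr : frontier Ω = closure Ω \ Ω := hΩo.frontier_eq
  have hza_not : z a ∉ Ω := by rw [hfr] at hza_fr; exact hza_fr.2
  have hza_cl : z a ∈ closure Ω := by rw [hfr] at hza_fr; exact hza_fr.1
  have he_ne : e ≠ 0 := by
    have h1 := hunit a haI; rw [← he] at h1
    intro h; rw [h, norm_zero] at h1; norm_num at h1
  -- midpoint
  set m : EuclideanSpace ℝ (Fin 2) := (1/2 : ℝ) • (x + y) with hm_def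
  have hm : m ∈ Ω := by
    have := hΩc hx hy (by norm_num : (0:ℝ) ≤ 1/2) (by norm_num : (0:ℝ) ≤ 1/2) (by norm_num)
    simpa [hm_def, smul_add] using this
  -- perpendicularity from equal radii
  have hperp : ⟪x - y, m - z a⟫ = 0 := by
    have hx2 : ⟪x - z a, x - z a⟫ = ⟪y - z a, y - z a⟫ := by
      rw [real_inner_self_eq_norm_sq, real_inner_self_eq_norm_sq, hr]
    simp only [inner_sub_left, inner_sub_right] at hx2 ⊢
    rw [hm_def]
    simp only [inner_smul_right, inner_add_right, inner_sub_right, inner_add_left,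
      inner_sub_left]
    rw [real_inner_comm y x, real_inner_comm (z a) x, real_inner_comm (z a) y] at *
    linarith
  -- m lies on the tangent line
  obtain ⟨t, ht⟩ := two_dim_perp (x - y) e (m - z a) (sub_ne_zero.2 hxy) he_ne h0 hperp
  have hm_eq : m = z a + t • e := by rw [← ht]; abel
  -- supporting functional
  obtain ⟨f, hf⟩ := geometric_hahn_banach_open_point hΩc hΩo hza_not
  have hcl : ∀ w ∈ closure Ω, f w ≤ f (z a) := by
    intro w hw
    have hsub : Ω ⊆ {w | f w ≤ f (z a)} := fun u hu => (hf u hu).le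
    have hC : IsClosed {w | f w ≤ f (z a)} := isClosed_le f.continuous continuous_const
    exact closure_minimal hsub hC hw
  have hz' : HasDerivAt z e a := (hz.differentiable (by simp) a).hasDerivAt
  have hg : HasDerivAt (fun s => f (z s)) (f e) a := f.hasFDerivAt.comp_hasDerivAt a hz'
  have hle_filter : 𝓝[>] a ≤ 𝓝[≠] a :=
    nhdsWithin_mono a (fun s hs => ne_of_gt hs)
  -- f e ≤ 0
  have hfe : f e ≤ 0 := by
    have hslope := (hasDerivAt_iff_tendsto_slope.mp hg).mono_left hle_filter
    refine le_of_tendsto hslope ?_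
    filter_upwards [Ioo_mem_nhdsGT_of_mem (Set.mem_Ico.2 ⟨le_rfl, hab⟩)] with s hs
    rw [slope_def_field]
    have hzs : f (z s) ≤ f (z a) := by
      rw [hfr] at hboundary
      exact hcl _ (hboundary s ⟨hs.1.le, hs.2.le⟩).1
    exact div_nonpos_of_nonpos_of_nonneg (by linarith) (by linarith [hs.1])
  -- t > 0
  have hfm : f m < f (z a) := hf m hm
  have hfm2 : f m = f (z a) + t * f e := by
    rw [hm_eq, map_add, map_smul]; rfl
  have htfe : t * f e < 0 := by linarith
  have ht_pos : 0 < t := by nlinarith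
  have hfe_neg : f e < 0 := by nlinarith
  -- ball around m
  obtain ⟨δ, hδpos, hδ⟩ := Metric.isOpen_iff.mp hΩo m hm
  -- find s slightly past a with z s ∈ Ω
  have hslopez := (hasDerivAt_iff_tendsto_slope.mp hz').mono_left hle_filter
  have h1 : ∀ᶠ s in 𝓝[>] a, ‖slope z a s - e‖ < δ / (2 * t) := by
    have := Metric.tendsto_nhds.mp hslopez (δ / (2 * t)) (by positivity)
    filter_upwards [this] with s hs
    rw [← dist_eq_norm]; exact hs
  have h2 : ∀ᶠ s in 𝓝[>] a, s ∈ Set.Ioo a (min b (a + t)) :=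
    Ioo_mem_nhdsGT_of_mem (Set.mem_Ico.2 ⟨le_rfl, lt_min hab (by linarith)⟩)
  obtain ⟨s, hs1, hs2⟩ := (h1.and h2).exists
  have hsa : a < s := hs2.1
  have hsb : s ≤ b := le_of_lt (lt_of_lt_of_le hs2.2 (min_le_left _ _))
  have hst : s - a < t := by
    have := lt_of_lt_of_le hs2.2 (min_le_right _ _); linarith
  set lam : ℝ := (s - a) / t with hlam
  have hlam_pos : 0 < lam := div_pos (by linarith) ht_pos
  have hlam_lt : lam < 1 := (div_lt_one ht_pos).2 hst
  have hlamt : lam * t = s - a := div_mul_cancel₀ _ (ne_of_gt ht_pos)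
  -- error bound
  have herr : ‖z s - z a - (s - a) • e‖ < lam * δ / 2 := by
    have hseq : z s - z a - (s - a) • e = (s - a) • (slope z a s - e) := by
      rw [smul_sub, slope_def_module, smul_inv_smul₀ (sub_ne_zero.2 (ne_of_gt hsa))]
    rw [hseq, norm_smul, Real.norm_eq_abs, abs_of_pos (by linarith)]
    calc (s - a) * ‖slope z a s - e‖ < (s - a) * (δ / (2 * t)) := by
          apply mul_lt_mul_of_pos_left hs1 (by linarith)
      _ = lam * δ / 2 := by
          rw [hlam]
          have htne : t ≠ 0 := ne_of_gt ht_pos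
          field_simp
  -- point of Ω close to z a
  obtain ⟨ω, hω, hωd⟩ := Metric.mem_closure_iff.mp hza_cl (lam * δ / 2) (by positivity)
  -- the convex combination
  set u : EuclideanSpace ℝ (Fin 2) := lam⁻¹ • (z s - (1 - lam) • ω) with hu_def
  have hu_comb : (1 - lam) • ω + lam • u = z s := by
    rw [hu_def, smul_inv_smul₀ (ne_of_gt hlam_pos)]; abel
  have hu_mem : u ∈ Metric.ball m δ := by
    rw [Metric.mem_ball, dist_eq_norm]
    have hlam_ne : lam ≠ 0 := ne_of_gt hlam_pos
    have hdecomp : u - m = lam⁻¹ • ((z s - z a - (s - a) • e) + (1 - lam) • (z a - ω)) := by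
      rw [hu_def, hm_eq, ← hlamt]
      match_scalars <;> field_simp <;> ring
    rw [hdecomp, norm_smul, Real.norm_eq_abs, abs_of_pos (inv_pos.2 hlam_pos)]
    have hb1 : ‖(z s - z a - (s - a) • e) + (1 - lam) • (z a - ω)‖
        ≤ ‖z s - z a - (s - a) • e‖ + (1 - lam) * ‖z a - ω‖ := by
      calc ‖(z s - z a - (s - a) • e) + (1 - lam) • (z a - ω)‖
          ≤ ‖z s - z a - (s - a) • e‖ + ‖(1 - lam) • (z a - ω)‖ := norm_add_le _ _
        _ = ‖z s - z a - (s - a) • e‖ + (1 - lam) * ‖z a - ω‖ := by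
            rw [norm_smul, Real.norm_eq_abs, abs_of_pos (by linarith)]
    have hb2 : ‖z a - ω‖ < lam * δ / 2 := by rw [← dist_eq_norm]; exact hωd
    have hb3 : (1 - lam) * ‖z a - ω‖ < lam * δ / 2 := by
      calc (1 - lam) * ‖z a - ω‖ ≤ 1 * ‖z a - ω‖ := by
            apply mul_le_mul_of_nonneg_right (by linarith) (norm_nonneg _)
        _ < lam * δ / 2 := by rw [one_mul]; exact hb2
    calc lam⁻¹ * ‖(z s - z a - (s - a) • e) + (1 - lam) • (z a - ω)‖
        ≤ lam⁻¹ * (‖z s - z a - (s - a) • e‖ + (1 - lam) * ‖z a - ω‖) := by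
          apply mul_le_mul_of_nonneg_left hb1 (le_of_lt (inv_pos.2 hlam_pos))
      _ < lam⁻¹ * (lam * δ / 2 + lam * δ / 2) := by
          apply mul_lt_mul_of_pos_left (by linarith) (inv_pos.2 hlam_pos)
      _ = δ := by field_simp; norm_num
  have hzs_in : z s ∈ Ω := by
    rw [← hu_comb]
    exact hΩc hω (hδ hu_mem) (by linarith) (by linarith) (by ring)
  have hzs_fr : z s ∈ frontier Ω := hboundary s ⟨hsa.le, hsb⟩
  rw [hfr] at hzs_fr
  exact hzs_fr.2 hzs_in
end

section
/- Let f, g : [0, ∞) → ℝ with f(δ) = |x − z(δ)|² − |y − z(δ)|², where z : [0, δ₀] → ℝ³ is smooth, h : [0, δ₀] → ℝ smooth vanishing to order k at δ = 0 and vanishing identically near δ = δ₀, and suppose f'(δ) ≥ c > 0 on [0, δ₀]. Then A(λ) := ∫₀^{δ₀} e^{i f(δ) λ} h(δ) dδ satisfies: e^{−i f(0) λ} A(λ) is a symbol of order −(k+1) in λ, i.e. for every j ≥ 0 there is C_j with |d^j/dλ^j (e^{−if(0)λ}A(λ))| ≤ C_j (1+|λ|)^{−k−1−j} for |λ| ≥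 1. -/
open Complex intervalIntegral


lemma iteratedDeriv_add' {n : ℕ} {f g : ℝ → ℝ} (x : ℝ) (hf : ContDiff ℝ (⊤:ℕ∞) f)
    (hg : ContDiff ℝ (⊤:ℕ∞) g) :
    iteratedDeriv n (fun t => f t + g t) x = iteratedDeriv n f x + iteratedDeriv n g x := by
  have e : (fun t => f t + g t) = f + g := rfl
  simp only [iteratedDeriv_eq_iteratedFDeriv, e]
  rw [iteratedFDeriv_add_apply (hf.of_le (by exact_mod_cast le_top)).contDiffAt (hg.of_le (by exact_mod_cast le_top)).contDiffAt]
  rfl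

lemma vord : ∀ n a b : ℕ, ∀ ψ φ : ℝ → ℝ, ContDiff ℝ (⊤:ℕ∞) ψ → ContDiff ℝ (⊤:ℕ∞) φ →
    (∀ i < a, iteratedDeriv i ψ 0 = 0) → (∀ i < b, iteratedDeriv i φ 0 = 0) →
    ∀ i, i < n → i < a + b → iteratedDeriv i (fun t => ψ t * φ t) 0 = 0 := by
  intro n
  induction n with
  | zero => omega
  | succ n IH =>
    intro a b ψ φ hψ hφ hψ0 hφ0 i hin hiab
    match i with
    | 0 =>
      simp only [iteratedDeriv_zero]
      rcases Nat.eq_zero_or_pos a with ha | ha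
      · have := hφ0 0 (by omega)
        simp only [iteratedDeriv_zero] at this
        rw [this, mul_zero]
      · have := hψ0 0 ha
        simp only [iteratedDeriv_zero] at this
        rw [this, zero_mul]
    | (s+1) =>
      rw [iteratedDeriv_succ']
      have hd : deriv (fun t => ψ t * φ t) = fun t => deriv ψ t * φ t + ψ t * deriv φ t := by
        funext t
        exact HasDerivAt.deriv (((hψ.differentiable (by simp) t).hasDerivAt).mul
          ((hφ.differentiable (by simp) t).hasDerivAt))
      rw [hd]
      have hψ' : ContDiff ℝ (⊤:ℕ∞) (deriv ψ) := (contDiff_infty_iff_deriv.mp hψ).2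
      have hφ' : ContDiff ℝ (⊤:ℕ∞) (deriv φ) := (contDiff_infty_iff_deriv.mp hφ).2
      rw [iteratedDeriv_add' _ (hψ'.mul hφ) (hψ.mul hφ')]
      have t1 : iteratedDeriv s (fun t => deriv ψ t * φ t) 0 = 0 := by
        apply IH (a-1) b _ _ hψ' hφ _ hφ0 s (by omega) (by omega)
        intro i hi
        rw [← iteratedDeriv_succ']
        exact hψ0 _ (by omega)
      have t2 : iteratedDeriv s (fun t => ψ t * deriv φ t) 0 = 0 := by
        apply IH a (b-1) _ _ hψ hφ' hψ0 _ s (by omega) (by omega)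
        intro i hi
        rw [← iteratedDeriv_succ']
        exact hφ0 _ (by omega)
      rw [t1, t2, add_zero]

lemma ibp (δ₀ : ℝ) (hδ₀ : 0 < δ₀) (g w ψ : ℝ → ℝ)
    (hg : ContDiff ℝ (⊤:ℕ∞) g) (hw : ContDiff ℝ (⊤:ℕ∞) w) (hψ : ContDiff ℝ (⊤:ℕ∞) ψ)
    (hgw : ∀ t ∈ Set.Icc 0 δ₀, deriv g t * w t = 1)
    (hψδ₀ : ψ δ₀ = 0) (lam : ℝ) (hlam : lam ≠ 0) :
    (∫ δ in (0:ℝ)..δ₀, Complex.exp (Complex.I * g δ * lam) * (ψ δ : ℂ))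
      = -(Complex.exp (Complex.I * g 0 * lam) * ((ψ 0 * w 0 : ℝ) : ℂ) * (Complex.I * lam)⁻¹)
        - (Complex.I * lam)⁻¹ * ∫ δ in (0:ℝ)..δ₀,
            Complex.exp (Complex.I * g δ * lam) * ((deriv (fun t => ψ t * w t) δ : ℝ) : ℂ) := by
  have hI : (Complex.I * lam) ≠ 0 := by
    simp [Complex.ext_iff, Complex.I_ne_zero, hlam]
  set q : ℝ → ℝ := fun t => ψ t * w t with hqdef
  have hq : ContDiff ℝ (⊤:ℕ∞) q := hψ.mul hw
  have hq' : ContDiff ℝ (⊤:ℕ∞) (deriv q) := (contDiff_infty_iff_deriv.mp hq).2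
  have hg' : ContDiff ℝ (⊤:ℕ∞) (deriv g) := (contDiff_infty_iff_deriv.mp hg).2
  set F : ℝ → ℂ := fun δ => Complex.exp (Complex.I * g δ * lam) * (q δ : ℂ) * (Complex.I * lam)⁻¹
    with hFdef
  set F' : ℝ → ℂ := fun δ =>
      (Complex.exp (Complex.I * g δ * lam) * (Complex.I * (deriv g δ) * lam) * (q δ : ℂ)
        + Complex.exp (Complex.I * g δ * lam) * ((deriv q δ : ℝ) : ℂ)) * (Complex.I * lam)⁻¹
    with hF'def
  have hgc : Continuous g := hg.continuous
  have hg'c : Continuous (deriv g) := (contDiff_infty_iff_deriv.mp hg).2.continuous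
  have hqc : Continuous q := (hψ.mul hw).continuous
  have hq'c : Continuous (deriv q) := (contDiff_infty_iff_deriv.mp (hψ.mul hw)).2.continuous
  have hcexp : Continuous fun δ : ℝ => Complex.exp (Complex.I * g δ * lam) := by
    fun_prop
  have hF : ∀ δ : ℝ, HasDerivAt F (F' δ) δ := by
    intro δ
    have h1 : HasDerivAt (fun t : ℝ => Complex.I * (g t : ℂ) * (lam : ℂ))
        (Complex.I * (deriv g δ) * lam) δ :=
      ((((hg.differentiable (by simp) δ).hasDerivAt).ofReal_comp.const_mul
        Complex.I).mul_const (lam : ℂ))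
    have h2 := h1.cexp
    have h3 : HasDerivAt (fun t : ℝ => ((q t : ℝ) : ℂ)) ((deriv q δ : ℝ) : ℂ) δ :=
      ((hq.differentiable (by simp) δ).hasDerivAt).ofReal_comp
    exact (h2.mul h3).mul_const _
  have hcF' : Continuous F' := by
    simp only [hF'def]
    fun_prop
  have hFTC : (∫ δ in (0:ℝ)..δ₀, F' δ) = F δ₀ - F 0 :=
    integral_eq_sub_of_hasDerivAt (fun x _ => hF x) (hcF'.intervalIntegrable _ _)
  have hcongr : (∫ δ in (0:ℝ)..δ₀, Complex.exp (Complex.I * g δ * lam) * (ψ δ : ℂ))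
      = ∫ δ in (0:ℝ)..δ₀,
          (F' δ - Complex.exp (Complex.I * g δ * lam) * ((deriv q δ : ℝ) : ℂ)
            * (Complex.I * lam)⁻¹) := by
    apply intervalIntegral.integral_congr
    intro δ hδ
    rw [Set.uIcc_of_le hδ₀.le] at hδ
    have e1 : deriv g δ * q δ = ψ δ := by
      have := hgw δ hδ
      simp only [hqdef]
      calc deriv g δ * (ψ δ * w δ) = ψ δ * (deriv g δ * w δ) := by ring
      _ = ψ δ := by rw [this, mul_one]
    simp only [hF'def]
    have : ((deriv g δ : ℝ) : ℂ) * ((q δ : ℝ) : ℂ) = ((ψ δ : ℝ) : ℂ) := by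
      push_cast [← e1]; ring
    have hI' : (Complex.I * lam) * (Complex.I * lam)⁻¹ = 1 := mul_inv_cancel₀ hI
    linear_combination (-Complex.exp (Complex.I * g δ * lam)) * this + (-Complex.exp (Complex.I * g δ * lam) * ((deriv g δ : ℝ) : ℂ) * ((q δ : ℝ) : ℂ)) * hI'
  rw [hcongr, intervalIntegral.integral_sub (hcF'.intervalIntegrable _ _) (Continuous.intervalIntegrable (by fun_prop) _ _), hFTC]
  have hFδ₀ : F δ₀ = 0 := by
    simp only [hFdef, hqdef, hψδ₀, zero_mul, Complex.ofReal_zero, mul_zero]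
  rw [intervalIntegral.integral_mul_const, hFδ₀]
  simp only [hFdef, hqdef]
  push_cast
  ring

section
variable (δ₀ : ℝ)

lemma declemma (lam : ℝ) (hlam : 1 ≤ |lam|) (e : ℤ) :
    |lam|⁻¹ * (1 + |lam|) ^ e ≤ 2 * (1 + |lam|) ^ (e - 1) := by
  have h0 : (0:ℝ) < |lam| := lt_of_lt_of_le one_pos hlam
  have h1 : (0:ℝ) < 1 + |lam| := by linarith
  have he : (1 + |lam|) ^ e = (1 + |lam|) ^ (e - 1) * (1 + |lam|) := by
    rw [← zpow_add_one₀ (ne_of_gt h1)]; ring_nf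
  rw [he]
  have h2 : (1 + |lam|) ≤ 2 * |lam| := by linarith
  calc |lam|⁻¹ * ((1 + |lam|) ^ (e-1) * (1 + |lam|))
      ≤ |lam|⁻¹ * ((1 + |lam|) ^ (e-1) * (2 * |lam|)) := by
        apply mul_le_mul_of_nonneg_left _ (by positivity)
        exact mul_le_mul_of_nonneg_left h2 (zpow_nonneg h1.le _)
    _ = 2 * (1 + |lam|) ^ (e-1) * (|lam|⁻¹ * |lam|) := by ring
    _ = 2 * (1 + |lam|) ^ (e-1) := by rw [inv_mul_cancel₀ (ne_of_gt h0), mul_one]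

lemma hexp1 (r lam : ℝ) : ‖Complex.exp (Complex.I * r * lam)‖ = 1 := by
  rw [show Complex.I * (r:ℂ) * (lam:ℂ) = ((r * lam : ℝ) : ℂ) * Complex.I by push_cast; ring,
    Complex.norm_exp_ofReal_mul_I]

lemma norm_ibp_le (hδ₀ : 0 < δ₀) (g w ψ : ℝ → ℝ)
    (hg : ContDiff ℝ (⊤:ℕ∞) g) (hw : ContDiff ℝ (⊤:ℕ∞) w) (hψ : ContDiff ℝ (⊤:ℕ∞) ψ)
    (hgw : ∀ t ∈ Set.Icc 0 δ₀, deriv g t * w t = 1)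
    (hψδ₀ : ψ δ₀ = 0) (lam : ℝ) (hlam0 : lam ≠ 0) (B : ℝ)
    (hB : ‖∫ δ in (0:ℝ)..δ₀, Complex.exp (Complex.I * g δ * lam) *
        ((deriv (fun t => ψ t * w t) δ : ℝ) : ℂ)‖ ≤ B) :
    ‖∫ δ in (0:ℝ)..δ₀, Complex.exp (Complex.I * g δ * lam) * (ψ δ : ℂ)‖ ≤
      (|ψ 0 * w 0| + B) * |lam|⁻¹ := by
  rw [ibp δ₀ hδ₀ g w ψ hg hw hψ hgw hψδ₀ lam hlam0]
  have hc : ‖(Complex.I * (lam:ℂ))⁻¹‖ = |lam|⁻¹ := by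
    rw [norm_inv, norm_mul]
    simp [Complex.norm_I]
  calc ‖-(Complex.exp (Complex.I * g 0 * lam) * ((ψ 0 * w 0 : ℝ) : ℂ) * (Complex.I * lam)⁻¹)
        - (Complex.I * lam)⁻¹ * ∫ δ in (0:ℝ)..δ₀, Complex.exp (Complex.I * g δ * lam) *
            ((deriv (fun t => ψ t * w t) δ : ℝ) : ℂ)‖
      ≤ ‖Complex.exp (Complex.I * g 0 * lam) * ((ψ 0 * w 0 : ℝ) : ℂ) * (Complex.I * lam)⁻¹‖
        + ‖(Complex.I * lam)⁻¹ * ∫ δ in (0:ℝ)..δ₀, Complex.exp (Complex.I * g δ * lam) *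
            ((deriv (fun t => ψ t * w t) δ : ℝ) : ℂ)‖ := by
        refine le_trans (norm_sub_le _ _) ?_
        rw [norm_neg]
    _ ≤ |ψ 0 * w 0| * |lam|⁻¹ + |lam|⁻¹ * B := by
        rw [norm_mul, norm_mul, norm_mul, hexp1, hc, one_mul, Complex.norm_real, Real.norm_eq_abs]
        gcongr
    _ = (|ψ 0 * w 0| + B) * |lam|⁻¹ := by ring

lemma core (hδ₀ : 0 < δ₀) (g w : ℝ → ℝ)
    (hg : ContDiff ℝ (⊤:ℕ∞) g) (hw : ContDiff ℝ (⊤:ℕ∞) w)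
    (hgw : ∀ t ∈ Set.Icc 0 δ₀, deriv g t * w t = 1) :
    ∀ m : ℕ, ∀ ψ : ℝ → ℝ, ∀ δ₁ : ℝ, δ₁ < δ₀ → ContDiff ℝ (⊤:ℕ∞) ψ →
    (∀ i < m, iteratedDeriv i ψ 0 = 0) → (∀ s, δ₁ ≤ s → ψ s = 0) →
    ∃ C : ℝ, 0 ≤ C ∧ ∀ lam : ℝ, 1 ≤ |lam| →
      ‖∫ δ in (0:ℝ)..δ₀, Complex.exp (Complex.I * g δ * lam) * (ψ δ : ℂ)‖ ≤
        C * (1 + |lam|) ^ (-(m:ℤ) - 1) := by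
  intro m
  induction m with
  | zero =>
    intro ψ δ₁ hδ₁ hψ hψ0 hψ1
    have hq'c : Continuous (deriv (fun t => ψ t * w t)) :=
      (contDiff_infty_iff_deriv.mp (hψ.mul hw)).2.continuous
    obtain ⟨M, hM⟩ := (isCompact_Icc (a := (0:ℝ)) (b := δ₀)).exists_bound_of_continuousOn
      hq'c.continuousOn
    refine ⟨2 * (|ψ 0 * w 0| + max M 0 * δ₀), by positivity, ?_⟩
    intro lam hlam
    have h0 : (0:ℝ) < |lam| := lt_of_lt_of_le one_pos hlam
    have hlam0 : lam ≠ 0 := by simpa [abs_pos] using h0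
    have hB : ‖∫ δ in (0:ℝ)..δ₀, Complex.exp (Complex.I * g δ * lam) *
        ((deriv (fun t => ψ t * w t) δ : ℝ) : ℂ)‖ ≤ max M 0 * δ₀ := by
      have := intervalIntegral.norm_integral_le_of_norm_le_const
        (a := (0:ℝ)) (b := δ₀) (C := max M 0)
        (f := fun δ => Complex.exp (Complex.I * g δ * lam) *
          ((deriv (fun t => ψ t * w t) δ : ℝ) : ℂ)) ?_
      · calc ‖_‖ ≤ max M 0 * |δ₀ - 0| := this
          _ = max M 0 * δ₀ := by rw [sub_zero, abs_of_pos hδ₀]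
      · intro δ hδ
        rw [Set.uIoc_of_le hδ₀.le] at hδ
        rw [norm_mul, hexp1, one_mul, Complex.norm_real]
        exact le_trans (hM δ ⟨hδ.1.le, hδ.2⟩) (le_max_left _ _)
    calc ‖∫ δ in (0:ℝ)..δ₀, Complex.exp (Complex.I * g δ * lam) * (ψ δ : ℂ)‖
        ≤ (|ψ 0 * w 0| + max M 0 * δ₀) * |lam|⁻¹ :=
          norm_ibp_le δ₀ hδ₀ g w ψ hg hw hψ hgw (hψ1 δ₀ hδ₁.le) lam hlam0 _ hB
      _ = (|ψ 0 * w 0| + max M 0 * δ₀) * (|lam|⁻¹ * (1 + |lam|) ^ (0:ℤ)) := by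
          rw [zpow_zero, mul_one]
      _ ≤ (|ψ 0 * w 0| + max M 0 * δ₀) * (2 * (1 + |lam|) ^ ((0:ℤ) - 1)) := by
          apply mul_le_mul_of_nonneg_left (declemma lam hlam 0) (by positivity)
      _ = 2 * (|ψ 0 * w 0| + max M 0 * δ₀) * (1 + |lam|) ^ (-(0:ℕ) - 1 : ℤ) := by
          norm_num; ring
  | succ m IH =>
    intro ψ δ₁ hδ₁ hψ hψ0 hψ1
    set q : ℝ → ℝ := fun t => ψ t * w t with hqdef
    have hq'smooth : ContDiff ℝ (⊤:ℕ∞) (deriv q) := (contDiff_infty_iff_deriv.mp (hψ.mul hw)).2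
    have hδ₁' : (δ₁ + δ₀) / 2 < δ₀ := by linarith
    have hq'0 : ∀ i < m, iteratedDeriv i (deriv q) 0 = 0 := by
      intro i hi
      rw [← iteratedDeriv_succ']
      exact vord (m + 2) (m + 1) 0 ψ w hψ hw hψ0 (by omega) (i+1) (by omega) (by omega)
    have hq'1 : ∀ s, (δ₁ + δ₀) / 2 ≤ s → deriv q s = 0 := by
      intro s hs
      have hmem : Set.Ioi δ₁ ∈ nhds s := by
        apply isOpen_Ioi.mem_nhds
        simp only [Set.mem_Ioi]
        linarith
      have heq : q =ᶠ[nhds s] (fun _ => (0:ℝ)) := by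
        filter_upwards [hmem] with t ht
        simp only [hqdef, hψ1 t (le_of_lt ht), zero_mul]
      rw [heq.deriv_eq, deriv_const]
    obtain ⟨C', hC'0, hC'⟩ := IH (deriv q) ((δ₁ + δ₀) / 2) hδ₁' hq'smooth hq'0 hq'1
    refine ⟨2 * C', by positivity, ?_⟩
    intro lam hlam
    have h0 : (0:ℝ) < |lam| := lt_of_lt_of_le one_pos hlam
    have hlam0 : lam ≠ 0 := by simpa [abs_pos] using h0
    have hψzero : ψ 0 = 0 := by
      have := hψ0 0 (by omega)
      simpa using this
    calc ‖∫ δ in (0:ℝ)..δ₀, Complex.exp (Complex.I * g δ * lam) * (ψ δ : ℂ)‖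
        ≤ (|ψ 0 * w 0| + C' * (1 + |lam|) ^ (-(m:ℤ) - 1)) * |lam|⁻¹ :=
          norm_ibp_le δ₀ hδ₀ g w ψ hg hw hψ hgw (hψ1 δ₀ hδ₁.le) lam hlam0 _ (hC' lam hlam)
      _ = C' * (|lam|⁻¹ * (1 + |lam|) ^ (-(m:ℤ) - 1)) := by
          rw [hψzero, zero_mul, abs_zero, zero_add]; ring
      _ ≤ C' * (2 * (1 + |lam|) ^ ((-(m:ℤ) - 1) - 1)) :=
          mul_le_mul_of_nonneg_left (declemma lam hlam _) hC'0
      _ = 2 * C' * (1 + |lam|) ^ (-((m:ℤ)+1) - 1) := by ring_nf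
      _ = 2 * C' * (1 + |lam|) ^ (-((m+1 : ℕ):ℤ) - 1) := by norm_num

end
lemma dint (δ₀ : ℝ) (g ρ : ℝ → ℝ) (hgc : Continuous g) (hρc : Continuous ρ) (lam : ℝ) :
    HasDerivAt (fun l : ℝ => ∫ δ in (0:ℝ)..δ₀, Complex.exp (Complex.I * g δ * l) * (ρ δ : ℂ))
      (∫ δ in (0:ℝ)..δ₀, Complex.exp (Complex.I * g δ * lam) * ((g δ * ρ δ : ℝ) : ℂ) * Complex.I)
      lam := by
  have key := intervalIntegral.hasDerivAt_integral_of_dominated_loc_of_deriv_le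
    (F := fun (l : ℝ) (δ : ℝ) => Complex.exp (Complex.I * g δ * l) * (ρ δ : ℂ))
    (F' := fun (l : ℝ) (δ : ℝ) =>
      Complex.exp (Complex.I * g δ * l) * ((g δ * ρ δ : ℝ) : ℂ) * Complex.I)
    (x₀ := lam) (a := (0:ℝ)) (b := δ₀) (μ := MeasureTheory.volume)
    (bound := fun δ => |g δ * ρ δ|) (s := Metric.ball lam 1) (Metric.ball_mem_nhds lam one_pos) ?_ ?_ ?_ ?_ ?_ ?_
  · exact key.2
  · filter_upwards with l
    exact (Continuous.aestronglyMeasurable (by fun_prop))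
  · exact Continuous.intervalIntegrable (by fun_prop) _ _
  · exact Continuous.aestronglyMeasurable (by fun_prop)
  · filter_upwards with δ hδ l hl
    rw [norm_mul, norm_mul, hexp1, one_mul, Complex.norm_real, Real.norm_eq_abs,
      Complex.norm_I, mul_one]
  · exact Continuous.intervalIntegrable (by fun_prop) _ _
  · filter_upwards with δ hδ l hl
    have h1 : HasDerivAt (fun x : ℝ => ((x : ℝ) : ℂ)) 1 l := by
      simpa using (hasDerivAt_id l).ofReal_comp
    have h2 : HasDerivAt (fun x : ℝ => Complex.I * (g δ : ℂ) * (x : ℂ))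
        (Complex.I * (g δ : ℂ)) l := by
      simpa using h1.const_mul (Complex.I * (g δ : ℂ))
    have h3 := (h2.cexp).mul_const ((ρ δ : ℝ) : ℂ)
    have e : Complex.exp (Complex.I * g δ * l) * (Complex.I * (g δ:ℂ)) * ((ρ δ : ℝ):ℂ)
        = Complex.exp (Complex.I * g δ * l) * ((g δ * ρ δ : ℝ) : ℂ) * Complex.I := by
      push_cast; ring
    exact e ▸ h3
lemma gpow_vanish (g : ℝ → ℝ) (hg : ContDiff ℝ (⊤:ℕ∞) g) (hg0 : g 0 = 0) :
    ∀ j : ℕ, ∀ i < j, iteratedDeriv i (fun t => g t ^ j) 0 = 0 := by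
  intro j
  induction j with
  | zero => omega
  | succ j IH =>
    intro i hi
    have e : (fun t => g t ^ (j+1)) = fun t => g t * g t ^ j := by funext t; ring
    rw [e]
    refine vord (j+1) 1 j g (fun t => g t ^ j) hg (hg.pow j) ?_ IH i (by omega) (by omega)
    intro i hi
    have : i = 0 := by omega
    subst this
    simpa using hg0

/-- Let `f(δ) = |x − z(δ)|² − |y − z(δ)|²` with `z` smooth, let `h` be smooth,
vanishing to order `k` at `δ = 0` and vanishing identically near `δ = δ₀`, and
suppose `f' ≥ c > 0` on `[0, δ₀]`. Then `A(λ) = ∫₀^{δ₀} e^{i f(δ) λ} h(δ) dδ`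
satisfies: `e^{−i f(0) λ} A(λ)` is a symbol of order `−(k+1)` in `λ`, i.e. each
`λ`-derivative of order `j` is `O((1+|λ|)^{−k−1−j})` for `|λ| ≥ 1`. -/
theorem stmt15 (δ₀ c : ℝ) (hδ₀ : 0 < δ₀) (hc : 0 < c) (k : ℕ)
    (x y : EuclideanSpace ℝ (Fin 3))
    (z : ℝ → EuclideanSpace ℝ (Fin 3)) (hz : ContDiff ℝ (⊤ : ℕ∞) z)
    (f : ℝ → ℝ) (hf : ∀ δ, f δ = ‖x - z δ‖ ^ 2 - ‖y - z δ‖ ^ 2)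
    (h : ℝ → ℝ) (hh : ContDiff ℝ (⊤ : ℕ∞) h)
    (hh0 : ∀ j < k, iteratedDeriv j h 0 = 0)
    (hhδ₀ : ∃ δ₁, δ₁ < δ₀ ∧ ∀ s, δ₁ ≤ s → h s = 0)
    (hf' : ∀ δ ∈ Set.Icc 0 δ₀, c ≤ deriv f δ)
    (A : ℝ → ℂ)
    (hA : ∀ lam : ℝ, A lam =
      ∫ δ in (0 : ℝ)..δ₀, Complex.exp (Complex.I * f δ * lam) * (h δ : ℂ)) :
    ∀ j : ℕ, ∃ C : ℝ, ∀ lam : ℝ, 1 ≤ |lam| →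
      ‖iteratedDeriv j (fun l : ℝ => Complex.exp (-Complex.I * f 0 * l) * A l) lam‖ ≤
        C * (1 + |lam|) ^ (-(k : ℤ) - 1 - (j : ℤ)) := by
  obtain ⟨δ₁, hδ₁, hh1⟩ := hhδ₀
  have hzs : ContDiff ℝ (⊤:ℕ∞) z := hz.of_le (by simp)
  have hhs : ContDiff ℝ (⊤:ℕ∞) h := hh.of_le (by simp)
  have hfC : ContDiff ℝ (⊤:ℕ∞) f := by
    have e : f = fun δ => ‖x - z δ‖^2 - ‖y - z δ‖^2 := funext hf
    rw [e]
    exact ((contDiff_const.sub hzs).norm_sq (𝕜 := ℝ)).sub ((contDiff_const.sub hzs).norm_sq (𝕜 := ℝ))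
  set g : ℝ → ℝ := fun δ => f δ - f 0 with hgdef
  have hgC : ContDiff ℝ (⊤:ℕ∞) g := hfC.sub contDiff_const
  have hg0 : g 0 = 0 := sub_self _
  have hderiv : ∀ t, deriv g t = deriv f t := fun t => deriv_sub_const _
  have hf'C : ContDiff ℝ (⊤:ℕ∞) (deriv f) := (contDiff_infty_iff_deriv.mp hfC).2
  set U : Set ℝ := {t | 0 < deriv f t} with hUdef
  have hU : IsOpen U := isOpen_lt continuous_const hf'C.continuous
  have hIccU : Set.Icc 0 δ₀ ⊆ U := fun t ht => lt_of_lt_of_le hc (hf' t ht)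
  obtain ⟨ε, hε, hthick⟩ := isCompact_Icc.exists_thickening_subset_open hU hIccU
  set bump : ContDiffBump (δ₀/2) :=
    ⟨δ₀/2 + ε/3, δ₀/2 + ε/2, by positivity, by linarith⟩ with hbdef
  have hball : Metric.closedBall (δ₀/2) (δ₀/2 + ε/2) ⊆ U := by
    intro u hu
    apply hthick
    rw [Metric.mem_thickening_iff]
    rw [Metric.mem_closedBall, Real.dist_eq] at hu
    have hu1 := (abs_le.mp hu).1
    have hu2 := (abs_le.mp hu).2
    rcases le_or_gt u 0 with h0 | h0
    · exact ⟨0, ⟨le_refl 0, hδ₀.le⟩, by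
        rw [Real.dist_eq, sub_zero]; rw [abs_lt]; constructor <;> linarith⟩
    rcases le_or_gt δ₀ u with h1 | h1
    · exact ⟨δ₀, ⟨hδ₀.le, le_refl δ₀⟩, by
        rw [Real.dist_eq]; rw [abs_lt]; constructor <;> linarith⟩
    · exact ⟨u, ⟨h0.le, h1.le⟩, by rw [dist_self]; exact hε⟩
  set w : ℝ → ℝ := fun t => bump t * (deriv f t)⁻¹ with hwdef
  have hwC : ContDiff ℝ (⊤:ℕ∞) w := by
    rw [contDiff_iff_contDiffAt]
    intro t
    by_cases htU : t ∈ U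
    · exact (bump.contDiff.contDiffAt).mul ((hf'C.contDiffAt).inv (ne_of_gt htU))
    · have ht' : t ∉ Metric.closedBall (δ₀/2) (δ₀/2 + ε/2) := fun hmem => htU (hball hmem)
      have hopen : IsOpen (Metric.closedBall (δ₀/2) (δ₀/2 + ε/2))ᶜ :=
        (Metric.isClosed_closedBall).isOpen_compl
      have hev : ∀ᶠ s in nhds t, w s = 0 := by
        filter_upwards [hopen.mem_nhds ht'] with s hs
        have hb0 : bump s = 0 := by
          apply bump.zero_of_le_dist
          simp only [Set.mem_compl_iff, Metric.mem_closedBall, not_le] at hs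
          exact hs.le
        rw [hwdef]
        simp only [hb0, zero_mul]
      exact (contDiffAt_const (c := (0:ℝ))).congr_of_eventuallyEq hev
  have hgw : ∀ t ∈ Set.Icc 0 δ₀, deriv g t * w t = 1 := by
    intro t ht
    rw [hderiv t]
    have h1 : bump t = 1 := by
      apply bump.one_of_mem_closedBall
      rw [Metric.mem_closedBall, Real.dist_eq, abs_le]
      constructor <;> [linarith [ht.1, show bump.rIn = δ₀/2 + ε/3 from rfl]; linarith [ht.2, show bump.rIn = δ₀/2 + ε/3 from rfl]]
    have h2 : deriv f t ≠ 0 := ne_of_gt (lt_of_lt_of_le hc (hf' t ht))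
    rw [hwdef]
    simp only [h1, one_mul]
    field_simp
  have hT : (fun l : ℝ => Complex.exp (-Complex.I * f 0 * l) * A l)
      = fun l : ℝ => ∫ δ in (0:ℝ)..δ₀, Complex.exp (Complex.I * g δ * l) * (h δ : ℂ) := by
    funext l
    rw [hA l, ← intervalIntegral.integral_const_mul]
    apply intervalIntegral.integral_congr
    intro δ _
    dsimp only
    rw [← mul_assoc, ← Complex.exp_add]
    congr 2
    rw [hgdef]
    push_cast
    ring
  have claim : ∀ j : ℕ, iteratedDeriv j (fun l : ℝ => Complex.exp (-Complex.I * f 0 * l) * A l)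
      = fun lam : ℝ => (∫ δ in (0:ℝ)..δ₀, Complex.exp (Complex.I * g δ * lam)
          * ((g δ ^ j * h δ : ℝ) : ℂ)) * Complex.I ^ j := by
    intro j
    induction j with
    | zero =>
      rw [iteratedDeriv_zero, hT]
      funext lam
      simp
    | succ j IH =>
      rw [iteratedDeriv_succ, IH]
      funext lam
      have hd := (dint δ₀ g (fun δ => g δ ^ j * h δ) hgC.continuous
        (((hgC.pow j).mul hhs).continuous) lam).mul_const (Complex.I ^ j)
      rw [hd.deriv]
      have : (∫ δ in (0:ℝ)..δ₀, Complex.exp (Complex.I * g δ * lam)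
            * ((g δ * (g δ ^ j * h δ) : ℝ) : ℂ) * Complex.I)
          = ∫ δ in (0:ℝ)..δ₀, Complex.exp (Complex.I * g δ * lam)
            * ((g δ ^ (j+1) * h δ : ℝ) : ℂ) * Complex.I := by
        apply intervalIntegral.integral_congr
        intro δ _
        push_cast
        ring
      rw [this, intervalIntegral.integral_mul_const]
      ring
  intro j
  have vanish : ∀ i < k + j, iteratedDeriv i (fun δ => g δ ^ j * h δ) 0 = 0 := by
    intro i hi
    exact vord (k + j) j k (fun t => g t ^ j) h (hgC.pow j) hhs
      (gpow_vanish g hgC hg0 j) hh0 i hi (by omega)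
  have vright : ∀ s, δ₁ ≤ s → g s ^ j * h s = 0 := by
    intro s hs
    rw [hh1 s hs, mul_zero]
  obtain ⟨C, hC0, hC⟩ := core δ₀ hδ₀ g w hgC hwC hgw (k + j)
    (fun δ => g δ ^ j * h δ) δ₁ hδ₁ ((hgC.pow j).mul hhs) vanish vright
  refine ⟨C, fun lam hlam => ?_⟩
  rw [claim j]
  have hnorm : ‖(∫ δ in (0:ℝ)..δ₀, Complex.exp (Complex.I * g δ * lam)
      * ((g δ ^ j * h δ : ℝ) : ℂ)) * Complex.I ^ j‖
      = ‖∫ δ in (0:ℝ)..δ₀, Complex.exp (Complex.I * g δ * lam)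
      * ((g δ ^ j * h δ : ℝ) : ℂ)‖ := by
    simp [norm_mul, norm_pow, Complex.norm_I]
  rw [hnorm]
  have hexp : (-(k : ℤ) - 1 - (j : ℤ)) = (-((k + j : ℕ) : ℤ) - 1) := by push_cast; ring
  rw [hexp]
  exact hC lam hlam
end
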